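/- For complex q with |q| < 1, the sum over k ≥ 0 of (-q;q^2)_k q^(k(k+1)) / (q^2;q^2)_k equals 1 / ((q^2;q^8)_∞ (q^3;q^8)_∞ (q^7;q^8)_∞). (Göllnitz's identity.) -/

import Mathlib

open scoped BigOperators

/-- Finite q-Pochhammer symbol `(a;q)_n` for natural `n`. -/
noncomputable def qPochN (a q : ℂ) (n : ℕ) : ℂ :=
  ∏ j ∈ Finset.range n, (1 - a * q ^ j)

/-- Bilateral q-Pochhammer symbol `(a;q)_k` for integer `k`:
`∏_{j=1}^{k}(1 - a q^{j-1})` for `k ≥ 0` and `∏_{j=1}^{-k}(1 - a q^{-j})⁻¹` for `k < 0`. -/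
noncomputable def qPochZ (a q : ℂ) (k : ℤ) : ℂ :=
  if 0 ≤ k then ∏ j ∈ Finset.range k.toNat, (1 - a * q ^ j)
  else (∏ j ∈ Finset.range (-k).toNat, (1 - a * q ^ (-(j + 1 : ℕ) : ℤ)))⁻¹

/-- Infinite q-Pochhammer symbol `(a;q)_∞ = ∏_{j≥0}(1 - a q^j)`. -/
noncomputable def qPochInf (a q : ℂ) : ℂ :=
  ∏' j : ℕ, (1 - a * q ^ j)

/-!
Expanding `(-q;q²)_n` by the q-binomial theorem turns the left side into the double series
`∑_{k,m} q^((k+m)(k+m+1)+k²) / ((q²;q²)_k (q²;q²)_m)`. Summing over `m` with Euler's identity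
`∑_m Q^(m(m-1)/2) z^m / (Q;Q)_m = (-z;Q)_∞` leaves `(-q²;q²)_∞ / (-q²;q²)_k` for each `k`, and
since `(q²;q²)_k (-q²;q²)_k = (q⁴;q⁴)_k` the sum over `k` is Euler's identity again, in base `q⁴`.
The value `(-q²;q²)_∞ (-q³;q⁴)_∞` becomes the right side through `(a;Q)_∞ (-a;Q)_∞ = (a²;Q²)_∞`
and `(a;Q)_∞ = (a;Q²)_∞ (aQ;Q²)_∞`. Euler's identity itself comes from the functional equation
`E(z) = (1 + z) E(zQ)` of its left side together with `E(zQⁿ) → E(0) = 1`.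
-/

open Finset Filter Topology

lemma Nat.add_choose_two (a b : ℕ) : (a + b).choose 2 = a.choose 2 + b.choose 2 + a * b := by
  induction b with
  | zero => simp
  | succ b ih =>
    rw [← add_assoc, Nat.choose_succ_succ', Nat.choose_one_right, ih, Nat.choose_succ_succ' b,
      Nat.choose_one_right]
    ring

lemma Nat.succ_choose_two_mul_two (k : ℕ) : (k + 1).choose 2 * 2 = k * (k + 1) := by
  induction k with
  | zero => rfl
  | succ k ih =>
    rw [Nat.choose_succ_succ', Nat.choose_one_right, add_mul, ih]
    ring

theorem HasSum.sum_antidiagonal {α A : Type*} [AddCommMonoid α] [TopologicalSpace α]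
    [RegularSpace α] [ContinuousAdd α] [AddCommMonoid A] [HasAntidiagonal A]
    {f : A × A → α} {a : α} (h : HasSum f a) :
    HasSum (fun n ↦ ∑ p ∈ antidiagonal n, f p) a :=
  (HasAntidiagonal.sigmaAntidiagonalEquivProd.hasSum_iff.2 h).sigma fun n ↦
    (Finset.sum_coe_sort (antidiagonal n) f) ▸ hasSum_fintype _

lemma norm_pow_lt_one {𝕜 : Type*} [NormedDivisionRing 𝕜] {x : 𝕜} (hx : ‖x‖ < 1) {n : ℕ}
    (hn : n ≠ 0) : ‖x ^ n‖ < 1 := by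
  rw [norm_pow]
  exact pow_lt_one₀ (norm_nonneg x) hx hn

lemma qPochN_zero (a Q : ℂ) : qPochN a Q 0 = 1 := prod_range_zero _

lemma qPochN_succ (a Q : ℂ) (n : ℕ) : qPochN a Q (n + 1) = qPochN a Q n * (1 - a * Q ^ n) :=
  prod_range_succ _ _

lemma qPochN_self_succ (Q : ℂ) (n : ℕ) : qPochN Q Q (n + 1) = qPochN Q Q n * (1 - Q ^ (n + 1)) := by
  rw [qPochN_succ, pow_succ']

lemma qPochN_mul_qPochN_neg (a Q : ℂ) (n : ℕ) :
    qPochN a Q n * qPochN (-a) Q n = qPochN (a ^ 2) (Q ^ 2) n := by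
  simp only [qPochN, ← prod_mul_distrib]
  exact prod_congr rfl fun j _ ↦ by ring

section qPochhammer

variable {a Q : ℂ}

lemma one_sub_mul_pow_ne_zero (ha : ‖a‖ < 1) (hQ : ‖Q‖ ≤ 1) (j : ℕ) : 1 - a * Q ^ j ≠ 0 := by
  refine sub_ne_zero.2 fun h ↦ ?_
  have : ‖a * Q ^ j‖ < 1 := by
    rw [norm_mul, norm_pow]
    exact (mul_le_of_le_one_right (norm_nonneg a) (pow_le_one₀ (norm_nonneg Q) hQ)).trans_lt ha
  rw [← h, norm_one] at this
  exact this.false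

lemma qPochN_ne_zero (ha : ‖a‖ < 1) (hQ : ‖Q‖ ≤ 1) (n : ℕ) : qPochN a Q n ≠ 0 :=
  prod_ne_zero_iff.2 fun j _ ↦ one_sub_mul_pow_ne_zero ha hQ j

lemma summable_norm_mul_pow (a : ℂ) (hQ : ‖Q‖ < 1) : Summable fun j : ℕ ↦ ‖a * Q ^ j‖ := by
  simpa only [norm_mul, norm_pow] using
    (summable_geometric_of_lt_one (norm_nonneg Q) hQ).mul_left ‖a‖

lemma multipliable_one_sub_mul_pow (a : ℂ) (hQ : ‖Q‖ < 1) :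
    Multipliable fun j : ℕ ↦ 1 - a * Q ^ j :=
  (multipliable_one_add_of_summable (f := fun j ↦ -a * Q ^ j)
    (summable_norm_mul_pow (-a) hQ)).congr fun j ↦ by ring

lemma tendsto_qPochN (a : ℂ) (hQ : ‖Q‖ < 1) :
    Tendsto (qPochN a Q) atTop (𝓝 (qPochInf a Q)) :=
  (multipliable_one_sub_mul_pow a hQ).hasProd.tendsto_prod_nat

lemma qPochInf_ne_zero (ha : ‖a‖ < 1) (hQ : ‖Q‖ < 1) : qPochInf a Q ≠ 0 := by
  have := tprod_one_add_ne_zero_of_summable (f := fun j ↦ -a * Q ^ j)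
    (fun j ↦ by simpa only [neg_mul, ← sub_eq_add_neg] using one_sub_mul_pow_ne_zero ha hQ.le j)
    (summable_norm_mul_pow (-a) hQ)
  simpa only [qPochInf, neg_mul, ← sub_eq_add_neg] using this

lemma qPochN_mul_qPochInf (a : ℂ) (hQ : ‖Q‖ < 1) (k : ℕ) :
    qPochN a Q k * qPochInf (a * Q ^ k) Q = qPochInf a Q := by
  have tail : HasProd (fun j ↦ 1 - a * Q ^ (j + k)) (qPochInf (a * Q ^ k) Q) := by
    convert (multipliable_one_sub_mul_pow (a * Q ^ k) hQ).hasProd using 1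
    · ext j
      ring
    · rfl
  exact (HasProd.prod_range_mul (f := fun j ↦ 1 - a * Q ^ j) tail).tprod_eq.symm

lemma qPochInf_mul_qPochInf_neg (a : ℂ) (hQ : ‖Q‖ < 1) :
    qPochInf a Q * qPochInf (-a) Q = qPochInf (a ^ 2) (Q ^ 2) := by
  have hQ2 := norm_pow_lt_one hQ two_ne_zero
  refine tendsto_nhds_unique ((tendsto_qPochN a hQ).mul (tendsto_qPochN (-a) hQ)) ?_
  simpa only [qPochN_mul_qPochN_neg] using tendsto_qPochN (a ^ 2) hQ2

lemma qPochInf_eq_qPochInf_sq_mul (a : ℂ) (hQ : ‖Q‖ < 1) :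
    qPochInf a Q = qPochInf a (Q ^ 2) * qPochInf (a * Q) (Q ^ 2) := by
  have hQ2 := norm_pow_lt_one hQ two_ne_zero
  rw [qPochInf, ← tprod_even_mul_odd]
  · simp only [qPochInf, pow_succ, pow_mul]
    congr 1
    exact tprod_congr fun j ↦ by ring
  · simpa only [pow_mul] using multipliable_one_sub_mul_pow a hQ2
  · simpa only [pow_succ, pow_mul, mul_assoc, mul_comm Q] using
      multipliable_one_sub_mul_pow (a * Q) hQ2

end qPochhammer

noncomputable def eulerTerm (Q z : ℂ) (k : ℕ) : ℂ :=
  Q ^ k.choose 2 * z ^ k / qPochN Q Q k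

lemma eulerTerm_zero (Q z : ℂ) : eulerTerm Q z 0 = 1 := by
  simp [eulerTerm, qPochN_zero]

lemma eulerTerm_mul (Q z w : ℂ) (k : ℕ) : eulerTerm Q (z * w) k = eulerTerm Q z k * w ^ k := by
  rw [eulerTerm, eulerTerm, mul_pow]
  ring

section Euler

variable {Q : ℂ}

lemma eulerTerm_succ (hQ : ∀ n, qPochN Q Q n ≠ 0) (z : ℂ) (k : ℕ) :
    eulerTerm Q z (k + 1) * (1 - Q ^ (k + 1)) = eulerTerm Q z k * (Q ^ k * z) := by
  have hk := hQ (k + 1)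
  rw [qPochN_self_succ] at hk
  simp only [eulerTerm, qPochN_self_succ, Nat.choose_succ_succ', Nat.choose_one_right]
  field_simp [left_ne_zero_of_mul hk, right_ne_zero_of_mul hk]
  ring

lemma summable_norm_eulerTerm (hQ : ‖Q‖ < 1) (z : ℂ) : Summable fun k ↦ ‖eulerTerm Q z k‖ := by
  have hQ0 : ∀ n, qPochN Q Q n ≠ 0 := qPochN_ne_zero hQ hQ.le
  have hsmall : Tendsto (fun k ↦ ‖Q‖ ^ k * ‖z‖) atTop (𝓝 0) := by
    simpa using (tendsto_pow_atTop_nhds_zero_of_lt_one (norm_nonneg Q) hQ).mul_const ‖z‖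
  refine summable_of_ratio_norm_eventually_le (r := 1 / 2) (by norm_num) ?_
  filter_upwards [hsmall.eventually_le_const (half_pos (sub_pos.2 hQ))] with k hk
  have hgap : 1 - ‖Q‖ ≤ ‖1 - Q ^ (k + 1)‖ := by
    calc 1 - ‖Q‖ ≤ 1 - ‖Q ^ (k + 1)‖ := by
          rw [norm_pow]
          exact sub_le_sub_left (pow_le_of_le_one (norm_nonneg Q) hQ.le k.succ_ne_zero) 1
      _ ≤ ‖1 - Q ^ (k + 1)‖ := by simpa using norm_sub_norm_le (1 : ℂ) (Q ^ (k + 1))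
  have hstep :
      ‖eulerTerm Q z (k + 1)‖ * ‖1 - Q ^ (k + 1)‖ = ‖eulerTerm Q z k‖ * (‖Q‖ ^ k * ‖z‖) := by
    simpa only [norm_mul, norm_pow] using congrArg norm (eulerTerm_succ hQ0 z k)
  have hcontract : ‖eulerTerm Q z (k + 1)‖ * (1 - ‖Q‖) ≤ ‖eulerTerm Q z k‖ * ((1 - ‖Q‖) / 2) :=
    calc ‖eulerTerm Q z (k + 1)‖ * (1 - ‖Q‖)
        ≤ ‖eulerTerm Q z (k + 1)‖ * ‖1 - Q ^ (k + 1)‖ := by gcongr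
      _ = ‖eulerTerm Q z k‖ * (‖Q‖ ^ k * ‖z‖) := hstep
      _ ≤ ‖eulerTerm Q z k‖ * ((1 - ‖Q‖) / 2) := by gcongr
  simp only [norm_norm]
  nlinarith [sub_pos.2 hQ]

lemma tsum_eulerTerm_eq_one_add_mul (hQ : ‖Q‖ < 1) (z : ℂ) :
    ∑' k, eulerTerm Q z k = (1 + z) * ∑' k, eulerTerm Q (z * Q) k := by
  have hQ0 : ∀ n, qPochN Q Q n ≠ 0 := qPochN_ne_zero hQ hQ.le
  have hs : Summable (eulerTerm Q (z * Q)) := (summable_norm_eulerTerm hQ _).of_norm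
  have hrec : ∀ k,
      eulerTerm Q z (k + 1) = eulerTerm Q (z * Q) (k + 1) + z * eulerTerm Q (z * Q) k := by
    intro k
    rw [eulerTerm_mul, eulerTerm_mul]
    linear_combination eulerTerm_succ hQ0 z k
  have hshift := hs.tsum_eq_zero_add
  rw [eulerTerm_zero] at hshift
  rw [(summable_norm_eulerTerm hQ z).of_norm.tsum_eq_zero_add, tsum_congr hrec,
    ((summable_nat_add_iff 1).2 hs).tsum_add (hs.mul_left z), tsum_mul_left, eulerTerm_zero]
  linear_combination -hshift

lemma tsum_eulerTerm_eq_qPochN_mul (hQ : ‖Q‖ < 1) (z : ℂ) (n : ℕ) :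
    ∑' k, eulerTerm Q z k = qPochN (-z) Q n * ∑' k, eulerTerm Q (z * Q ^ n) k := by
  induction n with
  | zero => simp [qPochN_zero]
  | succ n ih =>
    rw [ih, tsum_eulerTerm_eq_one_add_mul hQ, qPochN_succ, mul_assoc, pow_succ, mul_assoc]
    ring

lemma tendsto_tsum_eulerTerm_mul_pow (hQ : ‖Q‖ < 1) (z : ℂ) :
    Tendsto (fun n ↦ ∑' k, eulerTerm Q (z * Q ^ n) k) atTop (𝓝 1) := by
  have hlim : ∀ k, Tendsto (fun n ↦ eulerTerm Q (z * Q ^ n) k) atTop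
      (𝓝 (if k = 0 then 1 else 0)) := by
    intro k
    simp_rw [eulerTerm_mul, ← pow_mul, mul_comm _ k, pow_mul]
    rcases k.eq_zero_or_pos with rfl | hk
    · simp [eulerTerm_zero]
    · rw [if_neg hk.ne', ← mul_zero (eulerTerm Q z k)]
      exact tendsto_const_nhds.mul
        (tendsto_pow_atTop_nhds_zero_of_norm_lt_one (norm_pow_lt_one hQ hk.ne'))
  have hbound : ∀ n k, ‖eulerTerm Q (z * Q ^ n) k‖ ≤ ‖eulerTerm Q z k‖ := by
    intro n k
    rw [eulerTerm_mul, norm_mul, norm_pow, norm_pow]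
    exact mul_le_of_le_one_right (norm_nonneg _)
      (pow_le_one₀ (pow_nonneg (norm_nonneg Q) n) (pow_le_one₀ (norm_nonneg Q) hQ.le))
  simpa using tendsto_tsum_of_dominated_convergence (summable_norm_eulerTerm hQ z) hlim
    (Eventually.of_forall hbound)

theorem hasSum_eulerTerm (hQ : ‖Q‖ < 1) (z : ℂ) : HasSum (eulerTerm Q z) (qPochInf (-z) Q) := by
  have h := (tendsto_qPochN (-z) hQ).mul (tendsto_tsum_eulerTerm_mul_pow hQ z)
  simp_rw [← tsum_eulerTerm_eq_qPochN_mul hQ, mul_one] at h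
  exact tendsto_nhds_unique tendsto_const_nhds h ▸ (summable_norm_eulerTerm hQ z).of_norm.hasSum

end Euler

section Gauss

variable {Q : ℂ}

lemma sum_antidiagonal_eulerTerm_succ_mul (hQ : ∀ n, qPochN Q Q n ≠ 0) (z : ℂ) (n : ℕ) :
    (∑ p ∈ antidiagonal (n + 1), eulerTerm Q z p.1 / qPochN Q Q p.2) * (1 - Q ^ (n + 1)) =
      (∑ p ∈ antidiagonal n, eulerTerm Q z p.1 / qPochN Q Q p.2) * (1 + z * Q ^ n) := by
  set w : ℕ × ℕ → ℂ := fun p ↦ eulerTerm Q z p.1 / qPochN Q Q p.2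
  have hlower : ∀ k m, w (k, m + 1) * (1 - Q ^ (m + 1)) = w (k, m) := by
    intro k m
    have hm := hQ (m + 1)
    rw [qPochN_self_succ] at hm
    simp only [w, qPochN_self_succ]
    field_simp [right_ne_zero_of_mul hm]
  have hraise : ∀ k m, w (k + 1, m) * (Q ^ m * (1 - Q ^ (k + 1))) = z * Q ^ (k + m) * w (k, m) := by
    intro k m
    simp only [w, pow_add]
    linear_combination Q ^ m / qPochN Q Q m * eulerTerm_succ hQ z k
  -- `1 - Q^(k+m) = (1 - Q^m) + Q^m (1 - Q^k)` splits the sum into a lowering and a raising part.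
  calc (∑ p ∈ antidiagonal (n + 1), w p) * (1 - Q ^ (n + 1))
      = ∑ p ∈ antidiagonal (n + 1), w p * (1 - Q ^ p.2) +
          ∑ p ∈ antidiagonal (n + 1), w p * (Q ^ p.2 * (1 - Q ^ p.1)) := by
        rw [sum_mul, ← sum_add_distrib]
        refine sum_congr rfl fun p hp ↦ ?_
        rw [← mem_antidiagonal.1 hp, pow_add]
        ring
    _ = ∑ p ∈ antidiagonal n, w p + ∑ p ∈ antidiagonal n, z * Q ^ n * w p := by
        rw [Nat.sum_antidiagonal_succ', Nat.sum_antidiagonal_succ]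
        simp only [pow_zero, sub_self, mul_zero, zero_add, hlower, hraise]
        congr 1
        exact sum_congr rfl fun p hp ↦ by rw [mem_antidiagonal.1 hp]
    _ = (∑ p ∈ antidiagonal n, w p) * (1 + z * Q ^ n) := by
        rw [← mul_sum]
        ring

theorem qPochN_neg_div_qPochN (hQ : ∀ n, qPochN Q Q n ≠ 0) (z : ℂ) (n : ℕ) :
    qPochN (-z) Q n / qPochN Q Q n = ∑ p ∈ antidiagonal n, eulerTerm Q z p.1 / qPochN Q Q p.2 := by
  induction n with
  | zero => simp [qPochN_zero, eulerTerm_zero]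
  | succ n ih =>
    have hn := hQ (n + 1)
    rw [qPochN_self_succ] at hn
    rw [← mul_left_inj' (right_ne_zero_of_mul hn), sum_antidiagonal_eulerTerm_succ_mul hQ, ← ih,
      qPochN_succ, qPochN_self_succ]
    field_simp [left_ne_zero_of_mul hn, right_ne_zero_of_mul hn]
    ring

end Gauss

section DoubleSum

variable {Q : ℂ}

lemma eulerTerm_mul_pow_choose_two (hQ : ‖Q‖ < 1) (z : ℂ) (k : ℕ) :
    eulerTerm Q z k * Q ^ k.choose 2 = eulerTerm (Q ^ 2) z k * qPochN (-Q) Q k := by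
  have hneg : qPochN (-Q) Q k ≠ 0 := qPochN_ne_zero (by rwa [norm_neg]) hQ.le k
  simp only [eulerTerm, ← qPochN_mul_qPochN_neg Q Q k, ← pow_mul]
  field_simp [qPochN_ne_zero hQ hQ.le k, hneg]
  ring

lemma eulerTerm_div_qPochN_mul_pow_choose_two (x Q : ℂ) (k m : ℕ) :
    eulerTerm Q x k / qPochN Q Q m * Q ^ (k + m + 1).choose 2 =
      eulerTerm Q (x * Q) k * Q ^ k.choose 2 * eulerTerm Q (Q * Q ^ k) m := by
  rw [add_assoc, Nat.add_choose_two, Nat.choose_succ_succ', Nat.choose_one_right]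
  simp only [eulerTerm, pow_add, mul_pow, ← pow_mul]
  ring

theorem hasSum_qPochN_neg_mul_pow_choose_div (hQ : ‖Q‖ < 1) (x : ℂ) :
    HasSum (fun n ↦ qPochN (-x) Q n * Q ^ (n + 1).choose 2 / qPochN Q Q n)
      (qPochInf (-(x * Q)) (Q ^ 2) * qPochInf (-Q) Q) := by
  set G : ℕ × ℕ → ℂ := fun p ↦ eulerTerm Q x p.1 / qPochN Q Q p.2 * Q ^ (p.1 + p.2 + 1).choose 2
  have hrow : ∀ k, HasSum (fun m ↦ G (k, m)) (eulerTerm (Q ^ 2) (x * Q) k * qPochInf (-Q) Q) := by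
    intro k
    have h := (hasSum_eulerTerm hQ (Q * Q ^ k)).mul_left (eulerTerm Q (x * Q) k * Q ^ k.choose 2)
    rwa [← funext (eulerTerm_div_qPochN_mul_pow_choose_two x Q k), eulerTerm_mul_pow_choose_two hQ,
      mul_assoc, neg_mul_eq_neg_mul, qPochN_mul_qPochInf (-Q) hQ] at h
  have hsummable : Summable G := by
    refine ((summable_norm_eulerTerm hQ (x * Q)).mul_norm
      (summable_norm_eulerTerm hQ Q)).of_norm_bounded fun p ↦ ?_
    have hQ1 : ∀ n, ‖Q ^ n‖ ≤ 1 := fun n ↦ by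
      rw [norm_pow]; exact pow_le_one₀ (norm_nonneg Q) hQ.le
    simp only [G]
    rw [eulerTerm_div_qPochN_mul_pow_choose_two, eulerTerm_mul Q Q, ← pow_mul]
    simp only [norm_mul]
    calc ‖eulerTerm Q (x * Q) p.1‖ * ‖Q ^ p.1.choose 2‖ * (‖eulerTerm Q Q p.2‖ * ‖Q ^ (p.1 * p.2)‖)
        ≤ ‖eulerTerm Q (x * Q) p.1‖ * 1 * (‖eulerTerm Q Q p.2‖ * 1) := by gcongr <;> exact hQ1 _
      _ = _ := by ring
  have hG : HasSum G (qPochInf (-(x * Q)) (Q ^ 2) * qPochInf (-Q) Q) := by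
    have hcols := (hasSum_eulerTerm (norm_pow_lt_one hQ two_ne_zero) (x * Q)).mul_right
      (qPochInf (-Q) Q)
    exact (hsummable.hasSum.prod_fiberwise hrow).unique hcols ▸ hsummable.hasSum
  convert hG.sum_antidiagonal using 1
  ext n
  rw [mul_div_right_comm, qPochN_neg_div_qPochN (qPochN_ne_zero hQ hQ.le), sum_mul]
  exact sum_congr rfl fun p hp ↦ by rw [← mem_antidiagonal.1 hp]

end DoubleSum

lemma qPochInf_sq_mul_qPochInf_neg {Q : ℂ} (hQ : ‖Q‖ < 1) :
    qPochInf Q (Q ^ 2) * qPochInf (-Q) Q = 1 := by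
  have hQ2 := norm_pow_lt_one hQ two_ne_zero
  have hsplit := qPochInf_eq_qPochInf_sq_mul Q hQ
  have hpair := qPochInf_mul_qPochInf_neg Q hQ
  rw [← sq] at hsplit
  rw [hsplit] at hpair
  refine mul_right_cancel₀ (qPochInf_ne_zero hQ2 hQ2) ?_
  linear_combination hpair

lemma gollnitz_product {q : ℂ} (hq : ‖q‖ < 1) :
    qPochInf (-(q ^ 3)) (q ^ 4) * qPochInf (-(q ^ 2)) (q ^ 2) *
      (qPochInf (q ^ 2) (q ^ 8) * qPochInf (q ^ 3) (q ^ 8) * qPochInf (q ^ 7) (q ^ 8)) = 1 := by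
  have hq4 := norm_pow_lt_one hq (by norm_num : 4 ≠ 0)
  have hfirst := qPochInf_sq_mul_qPochInf_neg (norm_pow_lt_one hq two_ne_zero)
  have hsplit2 := qPochInf_eq_qPochInf_sq_mul (q ^ 2) hq4
  have hpair3 := qPochInf_mul_qPochInf_neg (q ^ 3) hq4
  have hsplit3 := qPochInf_eq_qPochInf_sq_mul (q ^ 3) hq4
  simp only [← pow_mul, ← pow_add, Nat.reduceMul, Nat.reduceAdd] at hfirst hsplit2 hpair3 hsplit3
  rw [hsplit2] at hfirst
  rw [hsplit3] at hpair3
  have hq6 : qPochInf (q ^ 6) (q ^ 8) ≠ 0 :=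
    qPochInf_ne_zero (norm_pow_lt_one hq (by norm_num)) (norm_pow_lt_one hq (by norm_num))
  refine mul_right_cancel₀ hq6 ?_
  linear_combination
    qPochInf (q ^ 3) (q ^ 8) * qPochInf (q ^ 7) (q ^ 8) * qPochInf (-(q ^ 3)) (q ^ 4) * hfirst +
      hpair3

theorem gollnitz_identity (q : ℂ) (hq : ‖q‖ < 1) :
    ∑' k : ℕ, qPochN (-q) (q ^ 2) k * q ^ (k * (k + 1)) / qPochN (q ^ 2) (q ^ 2) k =
      1 / (qPochInf (q ^ 2) (q ^ 8) * qPochInf (q ^ 3) (q ^ 8) * qPochInf (q ^ 7) (q ^ 8)) := by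
  have h := (hasSum_qPochN_neg_mul_pow_choose_div (norm_pow_lt_one hq two_ne_zero) q).tsum_eq
  simp only [← pow_mul, ← pow_succ', mul_comm 2, Nat.succ_choose_two_mul_two, Nat.reduceAdd,
    Nat.reduceMul] at h
  rw [h]
  exact eq_one_div_of_mul_eq_one_left (gollnitz_product hq)
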